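/- arXiv:2311.03527 — 3 statements merged into one kernel-verified Lean document; each statement's English description precedes it below -/
import Mathlib

section
/- Let G be a matrix Lie group with Lie algebra 𝔤, and let f : G → 𝔤 and curves g : [0,T] → G, μ : [0,T] → 𝔤*, η : [0,T] → 𝔤 be differentiable, satisfying: g'(t) = g(t)·f(g(t)), μ'(t) = -g(t)*·[Df(g(t))]*μ(t) + ad*_{f(g(t))}μ(t), and η'(t) = Df(g(t))·(g(t)·η(t)) - ad_{f(g(t))}η(t). Then the pairing ⟨μ(t), η(t)⟩ is constant in t. -/
open Matrix

attribute [local instance] Matrix.frobeniusNormedAddCommGroup Matrix.frobeniusNormedSpace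

/-!
Write `L w = Df(g)(g w) - ad_{f(g)} w` for the linearised left-trivialised vector field. The
variational equation is `η' = L η`, and the adjoint equation says that `μ' = ν` is `-Lᵀ μ` with
respect to the trace pairing `⟨μ, w⟩ = tr(μᵀ w)`. The product rule then gives
`d/dt ⟨μ, η⟩ = ⟨ν, η⟩ + ⟨μ, L η⟩ = -⟨μ, L η⟩ + ⟨μ, L η⟩ = 0`, and a function with vanishing
derivative on an interval is constant there.
-/

namespace Matrix

variable {𝕜 : Type*} [RCLike 𝕜] {m n : Type*} [Fintype m] [Fintype n]

def tracePairing : Matrix m n 𝕜 →L[𝕜] Matrix m n 𝕜 →L[𝕜] 𝕜 :=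
  (LinearMap.mk₂ 𝕜 (fun X Y : Matrix m n 𝕜 => trace (Xᵀ * Y))
    (fun _ _ _ => by rw [transpose_add, Matrix.add_mul, trace_add])
    (fun _ _ _ => by rw [transpose_smul, Matrix.smul_mul, trace_smul])
    (fun _ _ _ => by rw [Matrix.mul_add, trace_add])
    (fun _ _ _ => by rw [Matrix.mul_smul, trace_smul])).toContinuousBilinearMap

theorem hasDerivAt_trace_transpose_mul {A B : 𝕜 → Matrix m n 𝕜} {A' B' : Matrix m n 𝕜}
    {t : 𝕜} (hA : HasDerivAt A A' t) (hB : HasDerivAt B B' t) :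
    HasDerivAt (fun t => trace ((A t)ᵀ * B t)) (trace (A'ᵀ * B t) + trace ((A t)ᵀ * B')) t := by
  rw [add_comm]
  exact tracePairing.hasDerivAt_of_bilinear (fun _ => hA) (fun _ => hB)

end Matrix

theorem Convex.is_const_of_hasDerivWithinAt_zero {𝕜 E : Type*} [RCLike 𝕜]
    [NormedAddCommGroup E] [NormedSpace 𝕜 E] {f : 𝕜 → E} {s : Set 𝕜} (hs : Convex ℝ s)
    (hf : ∀ x ∈ s, HasDerivWithinAt f 0 s x) {x y : 𝕜} (hx : x ∈ s) (hy : y ∈ s) :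
    f x = f y := by
  have h := hs.norm_image_sub_le_of_norm_hasDerivWithin_le hf (C := 0) (fun _ _ => by simp) hx hy
  rw [zero_mul, norm_le_zero_iff, sub_eq_zero] at h
  exact h.symm

theorem adjoint_variational_pairing_constant_general
    {n : ℕ} (T : ℝ)
    (f : Matrix (Fin n) (Fin n) ℝ → Matrix (Fin n) (Fin n) ℝ)
    (Df : Matrix (Fin n) (Fin n) ℝ →
      (Matrix (Fin n) (Fin n) ℝ →L[ℝ] Matrix (Fin n) (Fin n) ℝ))
    (g μ η ν : ℝ → Matrix (Fin n) (Fin n) ℝ)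
    (hμ : ∀ t ∈ Set.Icc (0:ℝ) T, HasDerivAt μ (ν t) t)
    (hν : ∀ t ∈ Set.Icc (0:ℝ) T, ∀ w : Matrix (Fin n) (Fin n) ℝ,
      Matrix.trace ((ν t)ᵀ * w)
        = -Matrix.trace ((μ t)ᵀ * (Df (g t) (g t * w)))
          + Matrix.trace ((μ t)ᵀ * (f (g t) * w - w * f (g t))))
    (hη : ∀ t ∈ Set.Icc (0:ℝ) T, HasDerivAt η
      (Df (g t) (g t * η t) - (f (g t) * η t - η t * f (g t))) t) :
    ∀ s ∈ Set.Icc (0:ℝ) T, ∀ t ∈ Set.Icc (0:ℝ) T,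
      Matrix.trace ((μ s)ᵀ * η s) = Matrix.trace ((μ t)ᵀ * η t) := by
  have hderiv : ∀ t ∈ Set.Icc 0 T,
      HasDerivWithinAt (fun t => trace ((μ t)ᵀ * η t)) 0 (Set.Icc 0 T) t := by
    intro t ht
    have hcancel : trace ((ν t)ᵀ * η t)
        + trace ((μ t)ᵀ * (Df (g t) (g t * η t) - (f (g t) * η t - η t * f (g t)))) = 0 := by
      rw [hν t ht, Matrix.mul_sub _ (Df (g t) _), trace_sub]
      ring
    exact (hcancel ▸ hasDerivAt_trace_transpose_mul (hμ t ht) (hη t ht)).hasDerivWithinAt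
  exact fun s hs t ht => (convex_Icc 0 T).is_const_of_hasDerivWithinAt_zero hderiv hs ht

/-- Quadratic conservation law for the left-trivialized adjoint system and the
left-trivialized variational system on a matrix Lie group: along solutions
`g' = g·f(g)`, `⟨μ', η̃⟩ = -⟨μ, Df(g)(g·η̃)⟩ + ⟨μ, ad_{f(g)} η̃⟩` and
`η' = Df(g)(g·η) - ad_{f(g)} η`, the pairing `⟨μ(t), η(t)⟩ = Tr(μ(t)ᵀ η(t))`
is constant on `[0,T]`. -/
theorem adjoint_variational_pairing_constant
    {n : ℕ} (T : ℝ) (hT : 0 ≤ T)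
    (f : Matrix (Fin n) (Fin n) ℝ → Matrix (Fin n) (Fin n) ℝ)
    (Df : Matrix (Fin n) (Fin n) ℝ →
      (Matrix (Fin n) (Fin n) ℝ →L[ℝ] Matrix (Fin n) (Fin n) ℝ))
    (g μ η ν : ℝ → Matrix (Fin n) (Fin n) ℝ)
    (hDf : ∀ t ∈ Set.Icc (0:ℝ) T, HasFDerivAt f (Df (g t)) (g t))
    (hg : ∀ t ∈ Set.Icc (0:ℝ) T, HasDerivAt g (g t * f (g t)) t)
    (hμ : ∀ t ∈ Set.Icc (0:ℝ) T, HasDerivAt μ (ν t) t)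
    (hν : ∀ t ∈ Set.Icc (0:ℝ) T, ∀ w : Matrix (Fin n) (Fin n) ℝ,
      Matrix.trace ((ν t)ᵀ * w)
        = -Matrix.trace ((μ t)ᵀ * (Df (g t) (g t * w)))
          + Matrix.trace ((μ t)ᵀ * (f (g t) * w - w * f (g t))))
    (hη : ∀ t ∈ Set.Icc (0:ℝ) T, HasDerivAt η
      (Df (g t) (g t * η t) - (f (g t) * η t - η t * f (g t))) t) :
    ∀ s ∈ Set.Icc (0:ℝ) T, ∀ t ∈ Set.Icc (0:ℝ) T,
      Matrix.trace ((μ s)ᵀ * η s) = Matrix.trace ((μ t)ᵀ * η t) :=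
  adjoint_variational_pairing_constant_general T f Df g μ η ν hμ hν hη
end

section
/- Let G be a matrix Lie group with Lie algebra 𝔤, τ : 𝔤 → G a local diffeomorphism near 0 with τ(0) = e, and dτ_ξ its right-trivialized tangent satisfying Ad*_{τ(ξ)} ∘ (dτ⁻¹_ξ)* = (dτ⁻¹_{-ξ})*. Suppose sequences (g_k, ξ_k, m_k, η_k), k = 0,…,N, satisfy the discrete Lie–Poisson adjoint equations (dτ⁻¹_{Δt ξ_{k+1}})*m_{k+1} - Ad*_{τ(Δt ξ_k)}(dτ⁻¹_{Δt ξ_k})*m_k = -Δt g_k*·[Df(g_k)]*m_{k+1}, with ξ_{k+1} = f(g_k), g_{k+1} = g_k τ(Δt ξ_{k+1}), and the discrete variational equation Δt dτ_{Δt ξ_{k+1}}(Df(g_k)·(g_k η_k)) = -η_k + Ad_{τ(Δt ξ_{k+1})}η_{k+1}. Then ⟨(dτ⁻¹_{-Δt ξ_{k+1}})*m_{k+1}, η_{k+1}⟩ = ⟨(dτ⁻¹_{-Δt ξ_k})*m_k, η_k⟩ for all k. -/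
open Matrix

attribute [local instance] Matrix.frobeniusNormedAddCommGroup Matrix.frobeniusNormedSpace

/-- Discrete adjoint-variational quadratic conservation law (Theorem 4.6) on a matrix Lie
group: if `(g_k, ξ_k, m_k)` satisfy the discrete Lie–Poisson adjoint equations and `η_k`
the discrete variational equation, and the retraction identity
`dτ⁻¹_ξ ∘ Ad_{τ(ξ)} = dτ⁻¹_{-ξ}` holds, then
`⟨(dτ⁻¹_{-Δt ξ_{k+1}})* m_{k+1}, η_{k+1}⟩ = ⟨(dτ⁻¹_{-Δt ξ_k})* m_k, η_k⟩` for all `k`,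
where dual maps are taken w.r.t. the trace pairing `⟨m, v⟩ = Tr(mᵀ v)`. -/
theorem discrete_adjoint_conservation
    {n : ℕ} (Δt : ℝ)
    (τ : Matrix (Fin n) (Fin n) ℝ → Matrix (Fin n) (Fin n) ℝ)
    (hτunit : ∀ ξ, IsUnit (τ ξ))
    (dτ dτinv : Matrix (Fin n) (Fin n) ℝ →
      (Matrix (Fin n) (Fin n) ℝ →ₗ[ℝ] Matrix (Fin n) (Fin n) ℝ))
    (hinv₁ : ∀ ξ v, dτinv ξ (dτ ξ v) = v)
    (hinv₂ : ∀ ξ v, dτ ξ (dτinv ξ v) = v)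
    (hident : ∀ ξ v, dτinv ξ (τ ξ * v * (τ ξ)⁻¹) = dτinv (-ξ) v)
    (f : Matrix (Fin n) (Fin n) ℝ → Matrix (Fin n) (Fin n) ℝ)
    (Df : Matrix (Fin n) (Fin n) ℝ →
      (Matrix (Fin n) (Fin n) ℝ →L[ℝ] Matrix (Fin n) (Fin n) ℝ))
    (g ξ m η : ℕ → Matrix (Fin n) (Fin n) ℝ)
    (hDf : ∀ k, HasFDerivAt f (Df (g k)) (g k))
    (hξ : ∀ k, ξ (k+1) = f (g k))
    (hgup : ∀ k, g (k+1) = g k * τ (Δt • ξ (k+1)))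
    (hLP : ∀ k (v : Matrix (Fin n) (Fin n) ℝ),
      Matrix.trace ((m (k+1))ᵀ * dτinv (Δt • ξ (k+1)) v)
        - Matrix.trace ((m k)ᵀ *
            dτinv (Δt • ξ k) (τ (Δt • ξ k) * v * (τ (Δt • ξ k))⁻¹))
        = -(Δt * Matrix.trace ((m (k+1))ᵀ * Df (g k) (g k * v))))
    (hvar : ∀ k,
      Δt • dτ (Δt • ξ (k+1)) (Df (g k) (g k * η k))
        = -η k + τ (Δt • ξ (k+1)) * η (k+1) * (τ (Δt • ξ (k+1)))⁻¹) :
    ∀ k, Matrix.trace ((m (k+1))ᵀ * dτinv (-(Δt • ξ (k+1))) (η (k+1)))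
      = Matrix.trace ((m k)ᵀ * dτinv (-(Δt • ξ k)) (η k)) := by
  intro k
  have h1 := hLP k (η k)
  rw [hident] at h1
  have h2 : Δt • Df (g k) (g k * η k)
      = -(dτinv (Δt • ξ (k+1)) (η k)) + dτinv (-(Δt • ξ (k+1))) (η (k+1)) := by
    have h := congrArg (dτinv (Δt • ξ (k+1))) (hvar k)
    simpa [_root_.map_smul, hinv₁, map_add, map_neg, hident] using h
  have h3 := congrArg (fun X => Matrix.trace ((m (k+1))ᵀ * X)) h2
  simp only [Matrix.mul_add, Matrix.mul_neg, Matrix.mul_smul, Matrix.trace_add,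
    Matrix.trace_neg, Matrix.trace_smul, smul_eq_mul] at h3
  linarith
end

section
/- Adjoint sensitivity formula (vector space version of Corollary 3.5): Let V be a finite-dimensional real inner-product space, f : V → V be C¹ with complete flow, g : [0,T] → V solve g' = f(g) with g(0) = g₀, and C : V → ℝ be differentiable. Let p : [0,T] → V solve the adjoint equation p'(t) = -Df(g(t))ᵀ p(t) with terminal condition p(T) = ∇C(g(T)). Then p(0) = ∇_{g₀} (C ∘ Φ_T)(g₀), i.e., for every δ ∈ V, ⟨p(0), δ⟩ = D(C ∘ Φ_T)(g₀)·δ, where Φ_T is the time-T flow of f. -/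
/-!
For `x` near `g₀` put `y t = Φ t x`. Pairing with the adjoint solution kills the linear part of
the perturbation equation: `d/dt ⟪p, y - g⟫ = ⟪p, f y - f g - Df(g)(y - g)⟫`. A Gronwall estimate
keeps `‖y - g‖ ≤ e^{L|T|} ‖x - g₀‖` on `[0, T]`, so the right-hand side is `o(‖x - g₀‖)`
uniformly in `t`, and `⟪p T, Φ T x - g T⟫ = ⟪p 0, x - g₀⟫ + o(‖x - g₀‖)`. Since `p T = ∇C(g T)`,
a chain rule that needs only this linearization of `Φ T` along `p T` (together with the Lipschitz
bound) gives `D(C ∘ Φ T)(g₀) = ⟪p 0, ·⟫`; differentiability of the flow is never used.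
-/

open RealInnerProductSpace Set Metric Real Filter Topology Asymptotics

theorem IsCompact.exists_pos_forall_norm_sub_sub_fderiv_le
    {E F : Type*} [NormedAddCommGroup E] [NormedSpace ℝ E] [NormedAddCommGroup F]
    [NormedSpace ℝ F] {f : E → F} (hf : ContDiff ℝ 1 f) {K : Set E} (hK : IsCompact K)
    {ε : ℝ} (hε : 0 < ε) :
    ∃ ρ > 0, ∀ x ∈ K, ∀ z ∈ ball x ρ, ‖f z - f x - fderiv ℝ f x (z - x)‖ ≤ ε * ‖z - x‖ := by
  obtain ⟨ρ, hρ, hunif⟩ := Metric.mem_uniformity_dist.1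
    (hK.uniformContinuousAt_of_continuousAt (fderiv ℝ f)
      (fun x _ => (hf.continuous_fderiv one_ne_zero).continuousAt) (dist_mem_uniformity hε))
  refine ⟨ρ, hρ, fun x hx z hz => ?_⟩
  refine (convex_ball x ρ).norm_image_sub_le_of_norm_fderiv_le'
    (fun w _ => hf.differentiable one_ne_zero w) (fun w hw => ?_) (mem_ball_self hρ) hz
  rw [← dist_eq_norm, dist_comm]
  exact (hunif (mem_ball'.1 hw) hx).le

theorem IsCompact.exists_pos_forall_norm_sub_le_mul
    {E F : Type*} [NormedAddCommGroup E] [NormedSpace ℝ E] [NormedAddCommGroup F]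
    [NormedSpace ℝ F] {f : E → F} (hf : ContDiff ℝ 1 f) {K : Set E} (hK : IsCompact K) :
    ∃ r > 0, ∃ L ≥ 0, ∀ x ∈ K, ∀ z ∈ closedBall x r, ‖f z - f x‖ ≤ L * ‖z - x‖ := by
  obtain ⟨ρ, hρ, htaylor⟩ := hK.exists_pos_forall_norm_sub_sub_fderiv_le hf one_pos
  obtain ⟨M, hM⟩ := hK.exists_bound_of_continuousOn (hf.continuous_fderiv one_ne_zero).continuousOn
  refine ⟨ρ / 2, half_pos hρ, max M 0 + 1, by positivity, fun x hx z hz => ?_⟩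
  have hzx : z ∈ ball x ρ := closedBall_subset_ball (half_lt_self hρ) hz
  calc ‖f z - f x‖ = ‖(f z - f x - fderiv ℝ f x (z - x)) + fderiv ℝ f x (z - x)‖ := by
        rw [sub_add_cancel]
    _ ≤ 1 * ‖z - x‖ + max M 0 * ‖z - x‖ :=
        norm_add_le_of_le (htaylor x hx z hzx)
          ((fderiv ℝ f x).le_of_opNorm_le ((hM x hx).trans (le_max_left _ _)) _)
    _ = (max M 0 + 1) * ‖z - x‖ := by ring

section Trajectories

variable {E : Type*} [NormedAddCommGroup E] [NormedSpace ℝ E] {v : E → E} {y g : ℝ → E}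
  {K r T : ℝ}

theorem dist_le_of_trajectories_ODE_near (hK : 0 ≤ K)
    (hv : ∀ t ∈ Icc 0 T, ∀ z ∈ closedBall (g t) r, ‖v z - v (g t)‖ ≤ K * ‖z - g t‖)
    (hy : ∀ t, HasDerivAt y (v (y t)) t) (hg : ∀ t, HasDerivAt g (v (g t)) t)
    (hr : dist (y 0) (g 0) * exp (K * T) < r) :
    ∀ t ∈ Icc 0 T, dist (y t) (g t) ≤ dist (y 0) (g 0) * exp (K * t) := by
  set d := dist (y 0) (g 0)
  -- Wherever `‖y - g‖` touches the barrier `(d + η) e^{(K + η) t}`, the barrier grows strictly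
  -- faster, as the comparison lemma requires; the bound for `η = 0` follows in the limit.
  have hperturbed : ∀ η > 0, (d + η) * exp ((K + η) * T) < r →
      ∀ t ∈ Icc 0 T, dist (y t) (g t) ≤ (d + η) * exp ((K + η) * t) := by
    intro η hη hηr t ht
    rw [dist_eq_norm]
    refine image_norm_le_of_norm_deriv_right_lt_deriv_boundary' (f := fun t => y t - g t)
      (B := fun t => (d + η) * exp ((K + η) * t))
      (B' := fun t => (K + η) * ((d + η) * exp ((K + η) * t)))
      (fun s _ => ((hy s).sub (hg s)).continuousAt.continuousWithinAt)
      (fun s _ => ((hy s).sub (hg s)).hasDerivWithinAt) (by simp [d, dist_eq_norm, hη.le])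
      (by fun_prop) (fun s _ => ?_) (fun s hs heq => ?_) ht
    · exact ((((hasDerivAt_id s).const_mul (K + η)).exp.const_mul (d + η)).congr_deriv
        (by simp only [id]; ring)).hasDerivWithinAt
    · have hBr : (d + η) * exp ((K + η) * s) ≤ r := by
        refine le_trans ?_ hηr.le
        gcongr
        exact hs.2.le
      calc ‖v (y s) - v (g s)‖ ≤ K * ‖y s - g s‖ :=
            hv s (Ico_subset_Icc_self hs) (y s) (by rwa [mem_closedBall, dist_eq_norm, heq])
        _ < (K + η) * ‖y s - g s‖ := by rw [heq]; gcongr; linarith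
        _ = _ := by rw [heq]
  have hlim : ∀ s, Tendsto (fun η => (d + η) * exp ((K + η) * s)) (𝓝[>] 0)
      (𝓝 (d * exp (K * s))) := fun s => by
    have : Continuous fun η => (d + η) * exp ((K + η) * s) := by fun_prop
    simpa using (this.tendsto 0).mono_left nhdsWithin_le_nhds
  intro t ht
  refine ge_of_tendsto (hlim t) ?_
  filter_upwards [self_mem_nhdsWithin, (hlim T).eventually_lt_const hr] with η hη hηr
    using hperturbed η hη hηr t ht

theorem dist_le_of_trajectories_ODE_near_uIcc (hK : 0 ≤ K)
    (hv : ∀ t ∈ uIcc 0 T, ∀ z ∈ closedBall (g t) r, ‖v z - v (g t)‖ ≤ K * ‖z - g t‖)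
    (hy : ∀ t, HasDerivAt y (v (y t)) t) (hg : ∀ t, HasDerivAt g (v (g t)) t)
    (hr : dist (y 0) (g 0) * exp (K * |T|) < r) :
    ∀ t ∈ uIcc 0 T, dist (y t) (g t) ≤ dist (y 0) (g 0) * exp (K * |t|) := by
  rcases le_total 0 T with hT | hT
  · rw [uIcc_of_le hT, abs_of_nonneg hT] at *
    intro t ht
    rw [abs_of_nonneg ht.1]
    exact dist_le_of_trajectories_ODE_near hK hv hy hg hr t ht
  · have hreversed := dist_le_of_trajectories_ODE_near (v := fun z => -v z)
      (y := fun t => y (-t)) (g := fun t => g (-t)) (T := -T) hK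
      (fun t ht z hz => by
        simpa [← sub_eq_neg_add, norm_sub_rev] using
          hv (-t) (by rw [uIcc_of_ge hT]; constructor <;> linarith [ht.1, ht.2]) z hz)
      (fun t => by simpa [Function.comp_def] using (hy (-t)).scomp t (hasDerivAt_neg t))
      (fun t => by simpa [Function.comp_def] using (hg (-t)).scomp t (hasDerivAt_neg t))
      (by simpa [abs_of_nonpos hT] using hr)
    intro t ht
    rw [uIcc_of_ge hT] at ht
    simpa [abs_of_nonpos ht.2] using hreversed (-t) ⟨by linarith [ht.2], by linarith [ht.1]⟩

end Trajectories

theorem eventually_norm_flow_sub_le {V : Type*} [NormedAddCommGroup V] [NormedSpace ℝ V]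
    {f : V → V} (hf : ContDiff ℝ 1 f) {Φ : ℝ → V → V} (hΦ0 : ∀ x, Φ 0 x = x)
    (hΦ : ∀ x t, HasDerivAt (fun s => Φ s x) (f (Φ t x)) t) {g : ℝ → V}
    (hg : ∀ t, HasDerivAt g (f (g t)) t) (T : ℝ) :
    ∃ M ≥ 0, ∀ᶠ x in 𝓝 (g 0), ∀ t ∈ uIcc 0 T, ‖Φ t x - g t‖ ≤ M * ‖x - g 0‖ := by
  have hgc : Continuous g := continuous_iff_continuousAt.2 fun t => (hg t).continuousAt
  obtain ⟨r, hr, L, hL, hlip⟩ :=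
    ((isCompact_uIcc (a := (0 : ℝ)) (b := T)).image hgc).exists_pos_forall_norm_sub_le_mul hf
  have hsmall : Tendsto (fun x => dist x (g 0) * exp (L * |T|)) (𝓝 (g 0)) (𝓝 0) := by
    have : Continuous fun x => dist x (g 0) * exp (L * |T|) := by fun_prop
    simpa using this.tendsto (g 0)
  refine ⟨exp (L * |T|), (exp_pos _).le, ?_⟩
  filter_upwards [hsmall.eventually_lt_const hr] with x hx t ht
  have htube := dist_le_of_trajectories_ODE_near_uIcc hL
    (fun s hs => hlip (g s) (mem_image_of_mem g hs)) (hΦ x) hg (by rwa [hΦ0]) t ht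
  rw [hΦ0, dist_eq_norm, dist_eq_norm] at htube
  calc ‖Φ t x - g t‖ ≤ ‖x - g 0‖ * exp (L * |t|) := htube
    _ ≤ ‖x - g 0‖ * exp (L * |T|) := by
        have : |t| ≤ |T| := by simpa using abs_sub_left_of_mem_uIcc ht
        gcongr
    _ = exp (L * |T|) * ‖x - g 0‖ := mul_comm _ _

section Adjoint

variable {V : Type*} [NormedAddCommGroup V] [InnerProductSpace ℝ V]

theorem HasDerivAt.inner_of_adjoint {p u : ℝ → V} {p' u' : V} {A : V →L[ℝ] V} {t : ℝ}
    (hp : HasDerivAt p p' t) (hA : ∀ w, ⟪p', w⟫ = -⟪p t, A w⟫) (hu : HasDerivAt u u' t) :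
    HasDerivAt (fun s => ⟪p s, u s⟫) ⟪p t, u' - A (u t)⟫ t :=
  (hp.inner ℝ hu).congr_deriv (by rw [hA, inner_sub_right]; ring)

theorem abs_inner_sub_inner_le_of_adjoint {v : V → V} {y g p p' : ℝ → V} {A : ℝ → V →L[ℝ] V}
    {T P η : ℝ} (hy : ∀ t, HasDerivAt y (v (y t)) t) (hg : ∀ t, HasDerivAt g (v (g t)) t)
    (hp : ∀ t, HasDerivAt p (p' t) t) (hA : ∀ t w, ⟪p' t, w⟫ = -⟪p t, A t w⟫)
    (hP : ∀ t ∈ uIcc 0 T, ‖p t‖ ≤ P)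
    (hη : ∀ t ∈ uIcc 0 T, ‖v (y t) - v (g t) - A t (y t - g t)‖ ≤ η) :
    |⟪p T, y T - g T⟫ - ⟪p 0, y 0 - g 0⟫| ≤ P * η * |T| := by
  have hderiv : ∀ t, HasDerivAt (fun s => ⟪p s, y s - g s⟫)
      ⟪p t, v (y t) - v (g t) - A t (y t - g t)⟫ t := fun t =>
    (hp t).inner_of_adjoint (hA t) ((hy t).sub (hg t))
  have hbound : ∀ t ∈ uIcc 0 T, ‖⟪p t, v (y t) - v (g t) - A t (y t - g t)⟫‖ ≤ P * η :=
    fun t ht => (norm_inner_le_norm _ _).trans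
      (mul_le_mul (hP t ht) (hη t ht) (norm_nonneg _) ((norm_nonneg _).trans (hP t ht)))
  simpa using convex_uIcc 0 T |>.norm_image_sub_le_of_norm_hasDerivWithin_le
    (fun t _ => (hderiv t).hasDerivWithinAt) hbound left_mem_uIcc right_mem_uIcc

end Adjoint

theorem HasFDerivAt.comp_of_isBigO_of_isLittleO {𝕜 E F G : Type*} [NontriviallyNormedField 𝕜]
    [NormedAddCommGroup E] [NormedSpace 𝕜 E] [NormedAddCommGroup F] [NormedSpace 𝕜 F]
    [NormedAddCommGroup G] [NormedSpace 𝕜 G] {C : F → G} {Φ : E → F} {x₀ : E}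
    {C' : F →L[𝕜] G} {L : E →L[𝕜] G} (hC : HasFDerivAt C C' (Φ x₀))
    (hΦ : (fun x => Φ x - Φ x₀) =O[𝓝 x₀] fun x => x - x₀)
    (h : (fun x => C' (Φ x - Φ x₀) - L (x - x₀)) =o[𝓝 x₀] fun x => x - x₀) :
    HasFDerivAt (fun x => C (Φ x)) L x₀ := by
  have hΦc : Tendsto Φ (𝓝 x₀) (𝓝 (Φ x₀)) :=
    tendsto_sub_nhds_zero_iff.1 (hΦ.trans_tendsto (tendsto_sub_nhds_zero_iff.2 tendsto_id))
  have hCo := (hC.isLittleO.comp_tendsto hΦc).trans_isBigO hΦ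
  exact .of_isLittleO ((hCo.add h).congr_left fun x => by simp only [Function.comp]; abel)

theorem isLittleO_inner_flow_sub {V : Type*} [NormedAddCommGroup V] [InnerProductSpace ℝ V]
    {f : V → V} (hf : ContDiff ℝ 1 f) {Φ : ℝ → V → V} (hΦ0 : ∀ x, Φ 0 x = x)
    (hΦ : ∀ x t, HasDerivAt (fun s => Φ s x) (f (Φ t x)) t) {g : ℝ → V}
    (hg : ∀ t, HasDerivAt g (f (g t)) t) {T M : ℝ} (hM0 : 0 ≤ M)
    (hM : ∀ᶠ x in 𝓝 (g 0), ∀ t ∈ uIcc 0 T, ‖Φ t x - g t‖ ≤ M * ‖x - g 0‖) {p p' : ℝ → V}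
    (hp : ∀ t, HasDerivAt p (p' t) t) (hA : ∀ t w, ⟪p' t, w⟫ = -⟪p t, fderiv ℝ f (g t) w⟫) :
    (fun x => ⟪p T, Φ T x - g T⟫ - ⟪p 0, x - g 0⟫) =o[𝓝 (g 0)] fun x => x - g 0 := by
  have hgc : Continuous g := continuous_iff_continuousAt.2 fun t => (hg t).continuousAt
  have hpc : Continuous p := continuous_iff_continuousAt.2 fun t => (hp t).continuousAt
  obtain ⟨P, hP⟩ := (isCompact_uIcc (a := (0 : ℝ)) (b := T)).exists_bound_of_continuousOn
    hpc.continuousOn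
  have hP0 : 0 ≤ P := (norm_nonneg _).trans (hP 0 left_mem_uIcc)
  set D := P * M * |T|
  rw [isLittleO_iff]
  intro c hc
  obtain ⟨ρ, hρ, htaylor⟩ := ((isCompact_uIcc (a := (0 : ℝ)) (b := T)).image hgc)
    |>.exists_pos_forall_norm_sub_sub_fderiv_le hf (ε := c / (D + 1)) (by positivity)
  have hsmall : Tendsto (fun x => M * ‖x - g 0‖) (𝓝 (g 0)) (𝓝 0) := by
    have : Continuous fun x => M * ‖x - g 0‖ := by fun_prop
    simpa using this.tendsto (g 0)
  filter_upwards [hM, hsmall.eventually_lt_const hρ] with x hxM hxρ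
  have hdefect := abs_inner_sub_inner_le_of_adjoint (hΦ x) hg hp hA hP
    (η := c / (D + 1) * (M * ‖x - g 0‖)) fun t ht =>
      (htaylor (g t) (mem_image_of_mem g ht) (Φ t x)
        (mem_ball_iff_norm.2 ((hxM t ht).trans_lt hxρ))).trans (by gcongr; exact hxM t ht)
  rw [hΦ0] at hdefect
  calc ‖⟪p T, Φ T x - g T⟫ - ⟪p 0, x - g 0⟫‖ ≤ P * (c / (D + 1) * (M * ‖x - g 0‖)) * |T| :=
        hdefect
    _ = c * (D / (D + 1)) * ‖x - g 0‖ := by ring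
    _ ≤ c * 1 * ‖x - g 0‖ := by
        gcongr
        exact div_le_one_of_le₀ (by linarith) (by positivity)
    _ = c * ‖x - g 0‖ := by ring

/-- Adjoint sensitivity formula (vector space version of Corollary 3.5): if `g' = f(g)`,
`g(0) = g₀`, and `p` solves the adjoint equation `p' = -Df(g)ᵀ p` (stated via the inner
product: `⟪p'(t), v⟫ = -⟪p(t), Df(g(t))v⟫`) with terminal condition `p(T) = ∇C(g(T))`,
then `p(0)` is the gradient of the terminal cost `C ∘ Φ_T` at `g₀`:
`⟪p(0), δ⟫ = D(C ∘ Φ_T)(g₀)·δ` for all `δ`. -/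
theorem adjoint_sensitivity
    {V : Type*} [NormedAddCommGroup V] [InnerProductSpace ℝ V] [FiniteDimensional ℝ V]
    (f : V → V) (hf : ContDiff ℝ 1 f)
    (T : ℝ) (Φ : ℝ → V → V)
    (hΦ0 : ∀ x, Φ 0 x = x)
    (hΦ : ∀ x t, HasDerivAt (fun s => Φ s x) (f (Φ t x)) t)
    (g₀ : V) (g : ℝ → V) (hg : ∀ t, HasDerivAt g (f (g t)) t) (hg0 : g 0 = g₀)
    (C : V → ℝ) (hC : Differentiable ℝ C)
    (p pdot : ℝ → V)
    (hp : ∀ t, HasDerivAt p (pdot t) t)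
    (hpdot : ∀ t (v : V), ⟪pdot t, v⟫ = -⟪p t, fderiv ℝ f (g t) v⟫)
    (hpT : p T = gradient C (g T)) :
    ∀ δ : V, ⟪p 0, δ⟫ = fderiv ℝ (fun x => C (Φ T x)) g₀ δ := by
  subst hg0
  obtain ⟨M, hM0, hM⟩ := eventually_norm_flow_sub_le hf hΦ0 hΦ hg T
  have hΦg : Φ T (g 0) = g T := by
    simpa [sub_eq_zero] using hM.self_of_nhds T right_mem_uIcc
  have hCΦ : HasFDerivAt C (InnerProductSpace.toDual ℝ V (p T)) (Φ T (g 0)) := by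
    rw [hΦg, hpT]
    exact (hC (g T)).hasGradientAt
  have hd : HasFDerivAt (fun x => C (Φ T x)) (innerSL ℝ (p 0)) (g 0) := by
    refine hCΦ.comp_of_isBigO_of_isLittleO (.of_bound M ?_) ?_
    · filter_upwards [hM] with x hx
      simpa [hΦg] using hx T right_mem_uIcc
    · simpa [hΦg] using isLittleO_inner_flow_sub hf hΦ0 hΦ hg hM0 hM hp hpdot
  intro δ
  rw [hd.fderiv]
  rfl
end
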